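/- arXiv:2304.00507 — 2 statements merged into one kernel-verified Lean document; each statement's English description precedes it below -/
import Mathlib

section
/- Let m ∈ ℕ, let λ ∈ ℂ, let t₁, …, t_m ∈ ℝ, and let a be the diagonal complex m×m matrix with diagonal entries t₁λ, …, t_mλ. Then the map π : ℂ → GL(m, ℂ), π(z) = exp(z·a), cannot be simultaneously injective and have closed range in GL(m, ℂ). -/
open Matrix Complex Filter Topology

noncomputable def gmat (m : ℕ) (t : Fin m → ℝ) (y : ℝ) : Matrix (Fin m) (Fin m) ℂ :=
  Matrix.diagonal fun j => Complex.exp (Complex.I * (y * t j))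

lemma gmat_add (m : ℕ) (t : Fin m → ℝ) (y y' : ℝ) :
    gmat m t (y + y') = gmat m t y * gmat m t y' := by
  simp only [gmat, Matrix.diagonal_mul_diagonal]
  refine congrArg Matrix.diagonal (funext fun j => ?_)
  rw [← Complex.exp_add]
  congr 1; push_cast; ring

lemma gmat_zero (m : ℕ) (t : Fin m → ℝ) : gmat m t 0 = 1 := by
  simp [gmat]

lemma continuous_gmat (m : ℕ) (t : Fin m → ℝ) : Continuous (gmat m t) :=
  Continuous.matrix_diagonal (by continuity)

lemma gmat_star (m : ℕ) (t : Fin m → ℝ) (y : ℝ) :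
    (gmat m t y)ᴴ = gmat m t (-y) := by
  simp only [gmat, Matrix.diagonal_conjTranspose]
  refine congrArg Matrix.diagonal (funext fun j => ?_)
  rw [Pi.star_apply, RCLike.star_def, ← Complex.exp_conj]
  congr 1
  simp only [_root_.map_mul, Complex.conj_I, Complex.conj_ofReal]
  push_cast
  ring

lemma gmat_mul_neg (m : ℕ) (t : Fin m → ℝ) (y : ℝ) :
    gmat m t y * gmat m t (-y) = 1 := by
  rw [← gmat_add, add_neg_cancel, gmat_zero]

lemma exp_smul_diag (m : ℕ) (lam : ℂ) (t : Fin m → ℝ)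
    (a : Matrix (Fin m) (Fin m) ℂ)
    (ha : a = Matrix.diagonal fun i => (t i : ℂ) * lam) (z : ℂ) :
    NormedSpace.exp (z • a)
      = Matrix.diagonal fun j => Complex.exp (z * (t j * lam)) := by
  rw [ha, ← Matrix.diagonal_smul, Matrix.exp_diagonal]
  refine congrArg Matrix.diagonal (funext fun j => ?_)
  rw [Pi.coe_exp, Pi.smul_apply, smul_eq_mul, ← Complex.exp_eq_exp_ℂ]

theorem stmt3 (m : ℕ) (lam : ℂ) (t : Fin m → ℝ)
    (a : Matrix (Fin m) (Fin m) ℂ)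
    (ha : a = Matrix.diagonal fun i => (t i : ℂ) * lam) :
    ¬ ((Function.Injective fun z : ℂ => NormedSpace.exp (z • a)) ∧
       IsClosed {u : Matrix.GeneralLinearGroup (Fin m) ℂ |
         ∃ z : ℂ, (u : Matrix (Fin m) (Fin m) ℂ) = NormedSpace.exp (z • a)}) := by
  rintro ⟨hinj, hclosed⟩
  by_cases hdeg : ∀ j : Fin m, (t j : ℂ) * lam = 0
  · have h0 : a = 0 := by
      rw [ha, show (fun i => (t i : ℂ) * lam) = fun _ => 0 from funext hdeg]
      simp
    have h01 : (fun z : ℂ => NormedSpace.exp (z • a)) 0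
        = (fun z : ℂ => NormedSpace.exp (z • a)) 1 := by simp [h0]
    exact zero_ne_one (hinj h01)
  push_neg at hdeg
  obtain ⟨j₀, hj₀⟩ := hdeg
  have hlam : lam ≠ 0 := fun h => hj₀ (by simp [h])
  have ht0 : t j₀ ≠ 0 := fun h => hj₀ (by simp [h])
  set g : ℝ → Matrix (Fin m) (Fin m) ℂ := gmat m t with hgdef
  have hg : ∀ y : ℝ, g y = NormedSpace.exp ((Complex.I * y / lam) • a) := by
    intro y
    rw [exp_smul_diag m lam t a ha]
    refine congrArg Matrix.diagonal (funext fun j => ?_)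
    congr 1
    field_simp
  have hginj : Function.Injective g := by
    intro y y' h
    have h2 : (fun z : ℂ => NormedSpace.exp (z • a)) (Complex.I * y / lam)
        = (fun z : ℂ => NormedSpace.exp (z • a)) (Complex.I * y' / lam) := by
      simp only [← hg y, ← hg y', h]
    have h3 := hinj h2
    field_simp at h3
    exact_mod_cast h3
  set K : Set (Matrix (Fin m) (Fin m) ℂ) := Set.range g with hK
  have hmemK : ∀ y, g y ∈ K := fun y => ⟨y, rfl⟩
  -- closedness of K
  have hKclosed : IsClosed K := by
    rw [← closure_subset_iff_isClosed]
    intro x hx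
    haveI : FirstCountableTopology (Matrix (Fin m) (Fin m) ℂ) :=
      inferInstanceAs (FirstCountableTopology (Fin m → Fin m → ℂ))
    obtain ⟨b, hb, hbx⟩ := mem_closure_iff_seq_limit.mp hx
    choose ys hys using hb
    have helem : ∀ i j : Fin m,
        Filter.Tendsto (fun nn => gmat m t (ys nn) i j) Filter.atTop (nhds (x i j)) := by
      intro i j
      have hcont : Continuous fun A : Matrix (Fin m) (Fin m) ℂ => A i j :=
        continuous_id.matrix_elem i j
      have h2 := (hcont.tendsto x).comp hbx
      refine h2.congr fun nn => ?_
      simp only [Function.comp_apply]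
      rw [← hys nn]
    have hoff : ∀ i j, i ≠ j → x i j = 0 := by
      intro i j hij
      have h1 : Filter.Tendsto (fun _ : ℕ => (0 : ℂ)) Filter.atTop (nhds (x i j)) :=
        (helem i j).congr fun nn => by simp [gmat, Matrix.diagonal_apply_ne _ hij]
      exact (tendsto_nhds_unique h1 tendsto_const_nhds)
    have habs : ∀ i, ‖x i i‖ = 1 := by
      intro i
      have h1 : Filter.Tendsto (fun nn => ‖gmat m t (ys nn) i i‖)
          Filter.atTop (nhds (‖x i i‖)) :=
        (continuous_norm.tendsto _).comp (helem i i)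
      have h2 : ∀ nn : ℕ, ‖gmat m t (ys nn) i i‖ = 1 := by
        intro nn
        simp [gmat, Complex.norm_exp, Complex.mul_re]
      have h3 : Filter.Tendsto (fun _ : ℕ => (1 : ℝ)) Filter.atTop
          (nhds (‖x i i‖)) := h1.congr h2
      exact tendsto_nhds_unique h3 tendsto_const_nhds
    have hxdiag : x = Matrix.diagonal fun i => x i i := by
      ext i j
      by_cases hij : i = j
      · subst hij; rw [Matrix.diagonal_apply_eq]
      · rw [Matrix.diagonal_apply_ne _ hij, hoff i j hij]
    have hxmul : x * xᴴ = 1 := by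
      conv_lhs => rw [hxdiag]
      rw [Matrix.diagonal_conjTranspose, Matrix.diagonal_mul_diagonal, ← Matrix.diagonal_one]
      refine congrArg Matrix.diagonal (funext fun i => ?_)
      simp only [Pi.mul_apply, Pi.star_apply, RCLike.star_def, Complex.mul_conj,
        Complex.normSq_eq_norm_sq, habs i]
      norm_num
    have hxmul' : xᴴ * x = 1 := by
      conv_lhs => rw [hxdiag]
      rw [Matrix.diagonal_conjTranspose, Matrix.diagonal_mul_diagonal, ← Matrix.diagonal_one]
      refine congrArg Matrix.diagonal (funext fun i => ?_)
      simp only [Pi.mul_apply, Pi.star_apply, RCLike.star_def, mul_comm, Complex.mul_conj,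
        Complex.normSq_eq_norm_sq, habs i]
      norm_num
    set u : (Matrix (Fin m) (Fin m) ℂ)ˣ := ⟨x, xᴴ, hxmul, hxmul'⟩ with hu
    have hyun : ∀ nn : ℕ, gmat m t (ys nn) * gmat m t (-(ys nn)) = 1 := fun nn =>
      gmat_mul_neg m t _
    have hyun' : ∀ nn : ℕ, gmat m t (-(ys nn)) * gmat m t (ys nn) = 1 := by
      intro nn
      rw [← gmat_add, neg_add_cancel, gmat_zero]
    set un : ℕ → (Matrix (Fin m) (Fin m) ℂ)ˣ := fun nn =>
      ⟨gmat m t (ys nn), gmat m t (-(ys nn)), hyun nn, hyun' nn⟩ with hundef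
    have htend : Filter.Tendsto un Filter.atTop (nhds u) := by
      rw [Units.isInducing_embedProduct.tendsto_nhds_iff]
      have h1 : Filter.Tendsto (fun nn => gmat m t (ys nn)) Filter.atTop (nhds x) :=
        hbx.congr fun nn => (hys nn).symm
      have h2 : Filter.Tendsto (fun nn => (gmat m t (ys nn))ᴴ) Filter.atTop (nhds xᴴ) :=
        ((continuous_id.matrix_conjTranspose).tendsto x).comp h1
      have h3 : Filter.Tendsto (fun nn => ((gmat m t (ys nn) : Matrix (Fin m) (Fin m) ℂ),
          MulOpposite.op ((gmat m t (ys nn))ᴴ))) Filter.atTop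
          (nhds (x, MulOpposite.op xᴴ)) :=
        h1.prodMk_nhds ((MulOpposite.continuous_op.tendsto _).comp h2)
      have h5 := h3.congr (fun nn =>
        show ((gmat m t (ys nn) : Matrix (Fin m) (Fin m) ℂ),
            MulOpposite.op ((gmat m t (ys nn))ᴴ))
          = ((gmat m t (ys nn) : Matrix (Fin m) (Fin m) ℂ),
            MulOpposite.op (gmat m t (-(ys nn)))) from by rw [gmat_star])
      exact h5
    have hxS : u ∈ {u : Matrix.GeneralLinearGroup (Fin m) ℂ |
        ∃ z : ℂ, (u : Matrix (Fin m) (Fin m) ℂ) = NormedSpace.exp (z • a)} := by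
      refine hclosed.mem_of_tendsto htend (Filter.Eventually.of_forall fun nn => ?_)
      exact ⟨Complex.I * (ys nn) / lam, hg (ys nn)⟩
    obtain ⟨z, hz⟩ := hxS
    rw [exp_smul_diag m lam t a ha] at hz
    have hzx : x = Matrix.diagonal fun j => Complex.exp (z * (t j * lam)) := hz
    have hdj : x j₀ j₀ = Complex.exp (z * ((t j₀ : ℂ) * lam)) := by
      rw [hzx]; exact Matrix.diagonal_apply_eq _ _
    have hre : (z * lam).re = 0 := by
      have h1 := habs j₀
      rw [hdj, Complex.norm_exp] at h1
      have h2 : (z * ((t j₀ : ℂ) * lam)).re = 0 :=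
        Real.exp_injective (h1.trans Real.exp_zero.symm)
      rw [show z * ((t j₀ : ℂ) * lam) = (t j₀ : ℂ) * (z * lam) by ring,
        Complex.re_ofReal_mul] at h2
      exact (mul_eq_zero.mp h2).resolve_left ht0
    obtain ⟨v, hzl⟩ : ∃ v : ℝ, z * lam = Complex.I * (v : ℂ) :=
      ⟨(z * lam).im, by apply Complex.ext <;> simp [hre, Complex.mul_re, Complex.mul_im]⟩
    refine ⟨v, ?_⟩
    show gmat m t v = x
    rw [hzx]
    refine congrArg Matrix.diagonal (funext fun j => ?_)
    congr 1
    rw [show z * ((t j : ℂ) * lam) = (t j : ℂ) * (z * lam) by ring, hzl]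
    ring
  -- compactness of K
  have hDcomp : IsCompact {A : Matrix (Fin m) (Fin m) ℂ | ∀ i j, ‖A i j‖ ≤ 1} := by
    have hC : IsCompact (Set.univ.pi fun _ : Fin m =>
        Set.univ.pi fun _ : Fin m => Metric.closedBall (0 : ℂ) 1) :=
      isCompact_univ_pi fun _ => isCompact_univ_pi fun _ => isCompact_closedBall 0 1
    have heq : {A : Matrix (Fin m) (Fin m) ℂ | ∀ i j, ‖A i j‖ ≤ 1}
        = (Set.univ.pi fun _ : Fin m =>
            Set.univ.pi fun _ : Fin m => Metric.closedBall (0 : ℂ) 1) := by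
      ext A
      simp only [Set.mem_setOf_eq]
      exact ⟨fun h i _ j _ => by simpa using h i j, fun h i j => by simpa using h i trivial j trivial⟩
    rw [heq]
    exact hC
  have hKsub : K ⊆ {A : Matrix (Fin m) (Fin m) ℂ | ∀ i j, ‖A i j‖ ≤ 1} := by
    rintro x ⟨y, rfl⟩ i j
    by_cases hij : i = j
    · subst hij
      simp only [hgdef, gmat, Matrix.diagonal_apply_eq, Complex.norm_exp]
      simp
    · simp [hgdef, gmat, Matrix.diagonal_apply_ne _ hij]
  have hKcomp : IsCompact K := hDcomp.of_isClosed_subset hKclosed hKsub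
  -- Baire category argument
  haveI : CompactSpace ↥K := isCompact_iff_compactSpace.mp hKcomp
  haveI : Nonempty ↥K := ⟨⟨g 0, hmemK 0⟩⟩
  haveI : RegularSpace (Matrix (Fin m) (Fin m) ℂ) :=
    inferInstanceAs (RegularSpace (Fin m → Fin m → ℂ))
  have hfc : ∀ n : ℕ, IsClosed ((Subtype.val ⁻¹' (g '' Set.Icc (-(n : ℝ)) n)) : Set ↥K) :=
    fun n => (((isCompact_Icc).image (continuous_gmat m t)).isClosed).preimage
      continuous_subtype_val
  have hfU : ⋃ n : ℕ, ((Subtype.val ⁻¹' (g '' Set.Icc (-(n : ℝ)) n)) : Set ↥K) = Set.univ := by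
    ext x
    simp only [Set.mem_iUnion, Set.mem_univ, iff_true, Set.mem_preimage]
    obtain ⟨y, hy⟩ := x.2
    refine ⟨⌈|y|⌉₊, ⟨y, ?_, hy⟩⟩
    have h1 : |y| ≤ (⌈|y|⌉₊ : ℝ) := Nat.le_ceil _
    constructor
    · linarith [neg_abs_le y]
    · linarith [le_abs_self y]
  obtain ⟨n, x0, hx0int⟩ := nonempty_interior_of_iUnion_of_closed hfc hfU
  obtain ⟨U, hUopen, hUV⟩ := isOpen_induced_iff.mp
    (isOpen_interior : IsOpen (interior ((Subtype.val ⁻¹' (g '' Set.Icc (-(n : ℝ)) n)) : Set ↥K)))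
  have hx0U : (x0 : Matrix (Fin m) (Fin m) ℂ) ∈ U := by
    have : x0 ∈ Subtype.val ⁻¹' U := by rw [hUV]; exact hx0int
    exact this
  have hUsub : ∀ y : ℝ, g y ∈ U → g y ∈ g '' Set.Icc (-(n : ℝ)) n := by
    intro y hyU
    have h1 : (⟨g y, hmemK y⟩ : ↥K) ∈ Subtype.val ⁻¹' U := hyU
    rw [hUV] at h1
    have h2 : (⟨g y, hmemK y⟩ : ↥K) ∈
        (Subtype.val ⁻¹' (g '' Set.Icc (-(n : ℝ)) n) : Set ↥K) := interior_subset h1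
    exact h2
  obtain ⟨y₀, hy₀⟩ := x0.2
  have hA : ∀ y : ℝ, g (y₀ + y) ∈ U → |y| ≤ (n : ℝ) + |y₀| := by
    intro y hy
    obtain ⟨w, hw, hww⟩ := hUsub _ hy
    have hwy : w = y₀ + y := hginj hww
    have hw' : |w| ≤ (n : ℝ) := abs_le.mpr ⟨hw.1, hw.2⟩
    have : y = w - y₀ := by rw [hwy]; ring
    rw [this]
    calc |w - y₀| ≤ |w| + |y₀| := abs_sub _ _
      _ ≤ (n : ℝ) + |y₀| := by linarith
  have hOopen : ∀ y : ℝ, IsOpen ((fun x => g (y₀ - y) * x) ⁻¹' U) := fun y =>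
    hUopen.preimage (continuous_mul_left _)
  have hcover : K ⊆ ⋃ y : ℝ, (fun x => g (y₀ - y) * x) ⁻¹' U := by
    rintro x ⟨w, rfl⟩
    refine Set.mem_iUnion.mpr ⟨w, ?_⟩
    show gmat m t (y₀ - w) * gmat m t w ∈ U
    rw [← gmat_add, show y₀ - w + w = y₀ by ring]
    show g y₀ ∈ U
    rw [hy₀]
    exact hx0U
  obtain ⟨s, hs⟩ := hKcomp.elim_finite_subcover _ hOopen hcover
  set B : ℝ := s.sum (fun y => |y|) with hB
  have hBy : ∀ y ∈ s, |y| ≤ B := fun y hy =>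
    Finset.single_le_sum (fun _ _ => abs_nonneg _) hy
  have hbound : ∀ w : ℝ, |w| ≤ B + ((n : ℝ) + |y₀|) := by
    intro w
    have := hs (hmemK w)
    simp only [Set.mem_iUnion, Set.mem_preimage] at this
    obtain ⟨y, hys, hyU⟩ := this
    have h2 : g (y₀ + (w - y)) ∈ U := by
      show gmat m t (y₀ + (w - y)) ∈ U
      rw [show y₀ + (w - y) = (y₀ - y) + w by ring, gmat_add]
      exact hyU
    have h3 := hA _ h2
    calc |w| = |y + (w - y)| := by ring_nf
      _ ≤ |y| + |w - y| := abs_add_le _ _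
      _ ≤ B + ((n : ℝ) + |y₀|) := by have := hBy y hys; linarith
  have := hbound (B + ((n : ℝ) + |y₀|) + 1)
  have habs := le_abs_self (B + ((n : ℝ) + |y₀|) + 1)
  linarith
end

section
/- Let G be a σ-compact locally compact Hausdorff topological group, let K be a compact Hausdorff topological group, and let φ : G → K be a continuous bijective group homomorphism. Then φ is a topological isomorphism (i.e., φ⁻¹ is also continuous). In particular, there is no continuous bijective group homomorphism from (ℝ, +) onto a compact Hausdorff topological group. -/
theorem stmt15 {G K : Type*} [Group G] [TopologicalSpace G] [IsTopologicalGroup G]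
    [LocallyCompactSpace G] [SigmaCompactSpace G] [T2Space G]
    [Group K] [TopologicalSpace K] [IsTopologicalGroup K] [CompactSpace K] [T2Space K]
    (φ : G →* K) (hφc : Continuous φ) (hφb : Function.Bijective φ) :
    (∃ e : G ≃ₜ K, ⇑e = ⇑φ) ∧
    ∀ (K' : Type) [TopologicalSpace K'] [Group K'] [IsTopologicalGroup K']
      [CompactSpace K'] [T2Space K'],
      ¬ ∃ ψ : ℝ → K', Continuous ψ ∧ Function.Bijective ψ ∧
        ∀ x y : ℝ, ψ (x + y) = ψ x * ψ y := by
  constructor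
  · have hopen : IsOpenMap φ := φ.isOpenMap_of_sigmaCompact hφb.2 hφc
    exact ⟨Equiv.toHomeomorphOfContinuousOpen (Equiv.ofBijective _ hφb) hφc hopen, rfl⟩
  · intro K' _ _ _ _ _ ⟨ψ, hc, hb, hmul⟩
    let φ' : Multiplicative ℝ →* K' :=
      { toFun := fun x => ψ (Multiplicative.toAdd x)
        map_one' := by
          have := hmul 0 0
          simpa using this
        map_mul' := fun x y => hmul _ _ }
    have hc' : Continuous φ' := hc
    have hb' : Function.Bijective φ' := hb
    have hopen : IsOpenMap φ' := φ'.isOpenMap_of_sigmaCompact hb'.2 hc'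
    have e : Multiplicative ℝ ≃ₜ K' :=
      Equiv.toHomeomorphOfContinuousOpen (Equiv.ofBijective _ hb') hc' hopen
    have : CompactSpace (Multiplicative ℝ) := e.symm.compactSpace
    have : CompactSpace ℝ := this
    exact (NoncompactSpace.noncompact_univ (X := ℝ)) (isCompact_univ)
end
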